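/- arXiv:1809.00514 — 2 statements merged into one kernel-verified Lean document; each statement's English description precedes it below -/
import Mathlib

section
/- For k, l ∈ {1, 2} and s, t ∈ {0, n}: if k = l = 2, then the tensor product datum M[2,s] ⊗ M[2,t] is isomorphic to M[2,0] ⊕ M[2,n]; if k + l < 4, then M[k,s] ⊗ M[l,t] is isomorphic to M[k+l−1, u], where u is the element of {0, n} congruent to s + t modulo 2n. -/
open TensorProduct

/-- A `𝔴H₄ₙ*`-datum: a vector space with the actions of the generators `G` and `X`. -/
structure Datum (k : Type*) [Field k] (V : Type*) [AddCommGroup V] [Module k V] where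
  G : Module.End k V
  X : Module.End k V

namespace Datum

variable {k : Type*} [Field k]
variable {V W : Type*} [AddCommGroup V] [Module k V] [AddCommGroup W] [Module k W]

/-- The tensor product of two data, via the comultiplication
`Δ(G) = G ⊗ G`, `Δ(X) = X ⊗ 1 + G ⊗ X`. -/
noncomputable def tensor (d : Datum k V) (e : Datum k W) : Datum k (V ⊗[k] W) where
  G := TensorProduct.map d.G e.G
  X := TensorProduct.map d.X LinearMap.id + TensorProduct.map d.G e.X

/-- Direct sum of two data. -/
noncomputable def dsum (d : Datum k V) (e : Datum k W) : Datum k (V × W) where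
  G := d.G.prodMap e.G
  X := d.X.prodMap e.X

/-- Isomorphism of data: a linear isomorphism intertwining the operators. -/
def Iso (d : Datum k V) (e : Datum k W) : Prop :=
  ∃ f : V ≃ₗ[k] W, (∀ v : V, f (d.G v) = e.G (f v)) ∧ (∀ v : V, f (d.X v) = e.X (f v))

/-- The datum `M[1,s]` for `s ∈ {0, n}`. -/
noncomputable def M1 (n s : ℕ) : Datum k k :=
  ⟨((-1 : k) ^ (s / n)) • (1 : Module.End k k), 0⟩

/-- The datum `M[2,s]` for `s ∈ {0, n}`. -/
noncomputable def M2 (n s : ℕ) : Datum k (Fin 2 → k) :=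
  ⟨Matrix.toLin' !![(-1 : k) ^ (s / n), 0; 0, -(-1 : k) ^ (s / n)],
   Matrix.toLin' !![0, 0; 1, 0]⟩

/-- The datum `P_j` for `1 ≤ j ≤ n - 1`. -/
noncomputable def P (q : k) (j : ℕ) : Datum k (Fin 2 → k) :=
  ⟨Matrix.toLin' !![q ^ j, 0; 0, -q ^ j],
   Matrix.toLin' !![0, 1 - q ^ (2 * j); 1, 0]⟩

/-- The datum `N_i` for `i ∈ {0, 1}`. -/
noncomputable def N (i : ℕ) : Datum k k :=
  ⟨0, ((-1 : k) ^ i) • (1 : Module.End k k)⟩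

/-- The datum `M₀`. -/
noncomputable def M0 : Datum k (Fin 2 → k) :=
  ⟨0, Matrix.toLin' !![0, 1; 1, 0]⟩

end Datum

/-! A datum on `k^ι` is a pair of matrices; tensor products of such data become Kronecker
products and direct sums block-diagonal matrices, so each isomorphism is a change of
basis checked on matrices. Tensoring with the one-dimensional `M[1,s]` (eigenvalue `a = ±1`)
multiplies `G` by `a`, and on the left also `X`, which the rescaling `e₁ ↦ a e₁` undoes. In
`M[2,a] ⊗ M[2,b]` the vector `e₀ ⊗ e₀` has `G`-eigenvalue `ab` and, with
`X (e₀ ⊗ e₀) = e₁ ⊗ e₀ + a e₀ ⊗ e₁`, spans a copy of `M[2]` with eigenvalue `ab`, while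
`e₀ ⊗ e₁, e₁ ⊗ e₁` span one with eigenvalue `-ab`. -/

namespace Datum

variable {k : Type*} [Field k]

section Iso

variable {U V W : Type*} [AddCommGroup U] [Module k U] [AddCommGroup V] [Module k V]
  [AddCommGroup W] [Module k W]

theorem Iso.refl (d : Datum k V) : Iso d d :=
  ⟨LinearEquiv.refl k V, fun _ => rfl, fun _ => rfl⟩

theorem Iso.symm {d : Datum k V} {e : Datum k W} (h : Iso d e) : Iso e d := by
  obtain ⟨f, hG, hX⟩ := h
  refine ⟨f.symm, fun w => f.injective ?_, fun w => f.injective ?_⟩ <;>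
    simp [hG, hX]

theorem Iso.trans {c : Datum k U} {d : Datum k V} {e : Datum k W}
    (h₁ : Iso c d) (h₂ : Iso d e) : Iso c e := by
  obtain ⟨f, hfG, hfX⟩ := h₁
  obtain ⟨g, hgG, hgX⟩ := h₂
  exact ⟨f.trans g, fun v => by simp [hfG, hgG], fun v => by simp [hfX, hgX]⟩

theorem iso_dsum_comm (d : Datum k V) (e : Datum k W) : Iso (dsum d e) (dsum e d) :=
  ⟨LinearEquiv.prodComm k V W, fun _ => rfl, fun _ => rfl⟩

end Iso

section Matrix

open Matrix Kronecker

variable {ι κ : Type*} [Fintype ι] [DecidableEq ι] [Fintype κ] [DecidableEq κ]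

def ofMatrix (A B : Matrix ι ι k) : Datum k (ι → k) :=
  ⟨toLin' A, toLin' B⟩

theorem iso_ofMatrix_of_conj {A B : Matrix ι ι k} {A' B' : Matrix κ κ k}
    (P : Matrix κ ι k) (Q : Matrix ι κ k) (hQP : Q * P = 1) (hPQ : P * Q = 1)
    (hA : P * A = A' * P) (hB : P * B = B' * P) :
    Iso (ofMatrix A B) (ofMatrix A' B') := by
  refine ⟨toLin'OfInv hQP hPQ, fun v => ?_, fun v => ?_⟩
  · change P *ᵥ (A *ᵥ v) = A' *ᵥ (P *ᵥ v)
    rw [mulVec_mulVec, mulVec_mulVec, hA]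
  · change P *ᵥ (B *ᵥ v) = B' *ᵥ (P *ᵥ v)
    rw [mulVec_mulVec, mulVec_mulVec, hB]

theorem iso_ofMatrix_toMatrix {V : Type*} [AddCommGroup V] [Module k V]
    (b : Module.Basis ι k V) (d : Datum k V) :
    Iso d (ofMatrix (LinearMap.toMatrix b b d.G) (LinearMap.toMatrix b b d.X)) :=
  ⟨b.equivFun, fun v => by simp [ofMatrix, LinearMap.toMatrix_mulVec_repr],
    fun v => by simp [ofMatrix, LinearMap.toMatrix_mulVec_repr]⟩

theorem iso_tensor_ofMatrix (A B : Matrix ι ι k) (A' B' : Matrix κ κ k) :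
    Iso (tensor (ofMatrix A B) (ofMatrix A' B'))
      (ofMatrix (A ⊗ₖ A') (B ⊗ₖ 1 + A ⊗ₖ B')) := by
  simpa [tensor, ofMatrix, TensorProduct.toMatrix_map] using
    iso_ofMatrix_toMatrix ((Pi.basisFun k ι).tensorProduct (Pi.basisFun k κ))
      (tensor (ofMatrix A B) (ofMatrix A' B'))

theorem iso_dsum_ofMatrix (A B : Matrix ι ι k) (A' B' : Matrix κ κ k) :
    Iso (dsum (ofMatrix A B) (ofMatrix A' B'))
      (ofMatrix (fromBlocks A 0 0 A') (fromBlocks B 0 0 B')) := by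
  simpa [dsum, ofMatrix, LinearMap.toMatrix_prodMap] using
    iso_ofMatrix_toMatrix ((Pi.basisFun k ι).prod (Pi.basisFun k κ))
      (dsum (ofMatrix A B) (ofMatrix A' B'))

end Matrix

def m1 (a : k) : Datum k k := ⟨a • 1, 0⟩

def m2 (a : k) : Datum k (Fin 2 → k) := ofMatrix !![a, 0; 0, -a] !![0, 0; 1, 0]

theorem M1_eq_m1 (n s : ℕ) : (M1 n s : Datum k k) = m1 ((-1) ^ (s / n)) := rfl

theorem M2_eq_m2 (n s : ℕ) : (M2 n s : Datum k (Fin 2 → k)) = m2 ((-1) ^ (s / n)) := rfl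

section Tensor

open Matrix Kronecker

variable {V : Type*} [AddCommGroup V] [Module k V]

theorem iso_tensor_m1_left (a : k) (d : Datum k V) :
    Iso (tensor (m1 a) d) ⟨a • d.G, a • d.X⟩ := by
  refine ⟨TensorProduct.lid k V, fun v => ?_, fun v => ?_⟩ <;>
    induction v using TensorProduct.induction_on with
    | zero => simp
    | tmul x y => simp [tensor, m1, smul_smul, mul_comm]
    | add x y hx hy => simp_all

theorem iso_tensor_m1_right (d : Datum k V) (b : k) :
    Iso (tensor d (m1 b)) ⟨b • d.G, d.X⟩ := by
  refine ⟨TensorProduct.rid k V, fun v => ?_, fun v => ?_⟩ <;>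
    induction v using TensorProduct.induction_on with
    | zero => simp
    | tmul x y => simp [tensor, m1, smul_smul, mul_comm]
    | add x y hx hy => simp_all

theorem iso_tensor_m1_m1 (a b : k) : Iso (tensor (m1 a) (m1 b)) (m1 (a * b)) := by
  simpa [m1, smul_smul, mul_comm] using iso_tensor_m1_right (m1 a) b

theorem iso_tensor_m2_m1 (a b : k) : Iso (tensor (m2 a) (m1 b)) (m2 (a * b)) := by
  convert iso_tensor_m1_right (m2 a) b using 1
  simp [m2, ofMatrix, ← map_smul, mul_comm]

theorem iso_tensor_m1_m2 {a : k} (ha : a * a = 1) (b : k) :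
    Iso (tensor (m1 a) (m2 b)) (m2 (a * b)) := by
  refine (iso_tensor_m1_left a (m2 b)).trans ?_
  rw [show (⟨a • (m2 b).G, a • (m2 b).X⟩ : Datum k (Fin 2 → k)) =
    ofMatrix (a • !![b, 0; 0, -b]) (a • !![0, 0; 1, 0]) by simp [m2, ofMatrix, ← map_smul]]
  have hP : diagonal ![1, a] * diagonal ![1, a] = 1 := by
    rw [diagonal_mul_diagonal, ← diagonal_one]
    congr 1
    ext i; fin_cases i <;> simp [ha]
  refine iso_ofMatrix_of_conj (diagonal ![1, a]) (diagonal ![1, a]) hP hP ?_ ?_ <;>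
    ext i j <;> fin_cases i <;> fin_cases j <;> simp [ha, mul_comm]

theorem iso_tensor_m2_m2 (a b : k) :
    Iso (tensor (m2 a) (m2 b)) (dsum (m2 (a * b)) (m2 (-(a * b)))) := by
  -- row `r` of `P` (column `r` of `Q`) is written as a `2 × 2` array over the basis `eᵢ ⊗ eⱼ`
  let P : Matrix (Fin 2 ⊕ Fin 2) (Fin 2 × Fin 2) k := of fun r c =>
    Sum.elim ![!![1, 0; 0, 0], !![0, 0; 1, 0]] ![!![0, 1; -a, 0], !![0, 0; 0, 1]] r c.1 c.2
  let Q : Matrix (Fin 2 × Fin 2) (Fin 2 ⊕ Fin 2) k := of fun c r =>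
    Sum.elim ![!![1, 0; 0, 0], !![0, a; 1, 0]] ![!![0, 1; 0, 0], !![0, 0; 0, 1]] r c.1 c.2
  have hQP : Q * P = 1 := by
    ext ⟨i, j⟩ ⟨i', j'⟩
    fin_cases i <;> fin_cases j <;> fin_cases i' <;> fin_cases j' <;>
      simp [P, Q, mul_apply, Fin.sum_univ_two, one_apply]
  have hPQ : P * Q = 1 := by
    ext (i | i) (j | j) <;> fin_cases i <;> fin_cases j <;>
      simp [P, Q, mul_apply, Fintype.sum_prod_type, Fin.sum_univ_two, one_apply]
  refine (iso_tensor_ofMatrix _ _ _ _).trans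
    ((iso_ofMatrix_of_conj P Q hQP hPQ ?_ ?_).trans (iso_dsum_ofMatrix _ _ _ _).symm)
  all_goals
    ext (i | i) ⟨j, j'⟩ <;> fin_cases i <;> fin_cases j <;> fin_cases j' <;>
      simp [P, mul_apply, Fintype.sum_prod_type, Fin.sum_univ_two] <;> ring

end Tensor

theorem iso_dsum_m2_of_mul_self_eq_one {c : k} (hc : c * c = 1) :
    Iso (dsum (m2 c) (m2 (-c))) (dsum (m2 1) (m2 (-1))) := by
  rcases mul_self_eq_one_iff.1 hc with rfl | rfl
  · exact Iso.refl _
  · simpa using iso_dsum_comm (m2 (-1 : k)) (m2 1)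

end Datum

theorem neg_one_pow_div_ite {k : Type*} [Field k] {n s t : ℕ} (hn : n ≠ 0)
    (hs : s = 0 ∨ s = n) (ht : t = 0 ∨ t = n) :
    (-1 : k) ^ ((if s = t then 0 else n) / n) = (-1) ^ (s / n) * (-1) ^ (t / n) := by
  rcases hs with rfl | rfl <;> rcases ht with rfl | rfl <;>
    simp [hn, Ne.symm hn, Nat.div_self (Nat.pos_of_ne_zero hn)]

theorem stmt_17_general {k : Type*} [Field k] (n : ℕ) (hn : 2 ≤ n) (s t : ℕ)
    (hs : s = 0 ∨ s = n) (ht : t = 0 ∨ t = n) :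
    Datum.Iso (Datum.tensor (Datum.M2 (k := k) n s) (Datum.M2 (k := k) n t))
      (Datum.dsum (Datum.M2 (k := k) n 0) (Datum.M2 (k := k) n n)) ∧
    Datum.Iso (Datum.tensor (Datum.M1 (k := k) n s) (Datum.M1 (k := k) n t))
      (Datum.M1 (k := k) n (if s = t then 0 else n)) ∧
    Datum.Iso (Datum.tensor (Datum.M1 (k := k) n s) (Datum.M2 (k := k) n t))
      (Datum.M2 (k := k) n (if s = t then 0 else n)) ∧
    Datum.Iso (Datum.tensor (Datum.M2 (k := k) n s) (Datum.M1 (k := k) n t))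
      (Datum.M2 (k := k) n (if s = t then 0 else n)) := by
  open Datum in
  have hn0 : n ≠ 0 := by omega
  have hsq : ∀ m : ℕ, (-1 : k) ^ m * (-1) ^ m = 1 := fun m => by rw [← mul_pow]; simp
  simp only [M1_eq_m1, M2_eq_m2, neg_one_pow_div_ite hn0 hs ht, Nat.zero_div,
    Nat.div_self (Nat.pos_of_ne_zero hn0), pow_zero, pow_one]
  refine ⟨(iso_tensor_m2_m2 _ _).trans (iso_dsum_m2_of_mul_self_eq_one ?_),
    iso_tensor_m1_m1 _ _, iso_tensor_m1_m2 (hsq _) _, iso_tensor_m2_m1 _ _⟩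
  rw [mul_mul_mul_comm, hsq, hsq, one_mul]

/-- for `s, t ∈ {0, n}`: `M[2,s] ⊗ M[2,t] ≅ M[2,0] ⊕ M[2,n]`, and
for `k + l < 4`, `M[k,s] ⊗ M[l,t] ≅ M[k+l-1,u]` where `u ∈ {0,n}` is congruent to
`s + t` mod `2n` (that is, `u = 0` if `s = t` and `u = n` otherwise). -/
theorem stmt_17 {k : Type*} [Field k] [CharZero k] (n : ℕ) (hn : 2 ≤ n)
    (q : k) (hq : IsPrimitiveRoot q (2 * n)) (s t : ℕ)
    (hs : s = 0 ∨ s = n) (ht : t = 0 ∨ t = n) :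
    Datum.Iso (Datum.tensor (Datum.M2 (k := k) n s) (Datum.M2 (k := k) n t))
      (Datum.dsum (Datum.M2 (k := k) n 0) (Datum.M2 (k := k) n n)) ∧
    Datum.Iso (Datum.tensor (Datum.M1 (k := k) n s) (Datum.M1 (k := k) n t))
      (Datum.M1 (k := k) n (if s = t then 0 else n)) ∧
    Datum.Iso (Datum.tensor (Datum.M1 (k := k) n s) (Datum.M2 (k := k) n t))
      (Datum.M2 (k := k) n (if s = t then 0 else n)) ∧
    Datum.Iso (Datum.tensor (Datum.M2 (k := k) n s) (Datum.M1 (k := k) n t))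
      (Datum.M2 (k := k) n (if s = t then 0 else n)) :=
  stmt_17_general n hn s t hs ht
end

section
/- For i ∈ {0, 1} and 1 ≤ j ≤ n−1, the tensor product datum N_i ⊗ P_j is isomorphic to N_i ⊕ N_i, while the tensor product datum P_j ⊗ N_i is isomorphic to M₀. (In particular the tensor product of 𝔴H_{4n}*-modules is not commutative up to isomorphism.) -/
open TensorProduct

/-- Auxiliary linear equivalence given by the matrix `!![0,1;1,-εa]`. -/
noncomputable def eS {k : Type*} [Field k] (ε a : k) : (Fin 2 → k) ≃ₗ[k] (Fin 2 → k) :=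
  LinearEquiv.ofLinear (Matrix.toLin' !![0,1;1,-ε*a]) (Matrix.toLin' !![ε*a,1;1,0])
    (by
      rw [← Matrix.toLin'_mul, ← Matrix.toLin'_one (R := k) (n := Fin 2)]
      congr 1
      ext m l
      fin_cases m <;> fin_cases l <;> simp [Matrix.mul_apply, Fin.sum_univ_two])
    (by
      rw [← Matrix.toLin'_mul, ← Matrix.toLin'_one (R := k) (n := Fin 2)]
      congr 1
      ext m l
      fin_cases m <;> fin_cases l <;> simp [Matrix.mul_apply, Fin.sum_univ_two])

/-- for `i ∈ {0,1}` and `1 ≤ j ≤ n-1`: `N_i ⊗ P_j ≅ N_i ⊕ N_i` while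
`P_j ⊗ N_i ≅ M₀`; in particular the tensor product is not commutative up to isomorphism. -/
theorem stmt_18 {k : Type*} [Field k] [CharZero k] (n : ℕ) (hn : 2 ≤ n)
    (q : k) (hq : IsPrimitiveRoot q (2 * n)) (i : ℕ) (hi : i < 2)
    (j : ℕ) (hj1 : 1 ≤ j) (hj2 : j ≤ n - 1) :
    Datum.Iso (Datum.tensor (Datum.N (k := k) i) (Datum.P q j))
      (Datum.dsum (Datum.N (k := k) i) (Datum.N (k := k) i)) ∧
    Datum.Iso (Datum.tensor (Datum.P q j) (Datum.N (k := k) i)) (Datum.M0 (k := k)) ∧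
    ¬ Datum.Iso (Datum.tensor (Datum.N (k := k) i) (Datum.P q j))
        (Datum.tensor (Datum.P q j) (Datum.N (k := k) i)) := by
  have hε : ((-1:k) ^ i) * ((-1:k) ^ i) = 1 := by
    rw [← pow_add, ← two_mul, pow_mul]; norm_num
  refine ⟨?_, ?_, ?_⟩
  · -- N_i ⊗ P_j ≅ N_i ⊕ N_i
    refine ⟨(TensorProduct.lid k (Fin 2 → k)).trans
      (LinearEquiv.piFinTwo k (fun _ => k)), ?_, ?_⟩
    · have h : ((TensorProduct.lid k (Fin 2 → k)).trans
          (LinearEquiv.piFinTwo k (fun _ => k))).toLinearMap ∘ₗ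
          ((Datum.N (k := k) i).tensor (Datum.P q j)).G =
          ((Datum.N (k := k) i).dsum (Datum.N (k := k) i)).G ∘ₗ
          ((TensorProduct.lid k (Fin 2 → k)).trans
          (LinearEquiv.piFinTwo k (fun _ => k))).toLinearMap := by
        apply TensorProduct.ext'
        intro x y
        simp [Datum.tensor, Datum.N, Datum.dsum]
      intro v
      exact LinearMap.ext_iff.1 h v
    · have h : ((TensorProduct.lid k (Fin 2 → k)).trans
          (LinearEquiv.piFinTwo k (fun _ => k))).toLinearMap ∘ₗ
          ((Datum.N (k := k) i).tensor (Datum.P q j)).X =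
          ((Datum.N (k := k) i).dsum (Datum.N (k := k) i)).X ∘ₗ
          ((TensorProduct.lid k (Fin 2 → k)).trans
          (LinearEquiv.piFinTwo k (fun _ => k))).toLinearMap := by
        apply TensorProduct.ext'
        intro x y
        simp [Datum.tensor, Datum.N, Datum.dsum, smul_tmul', mul_comm,
          mul_left_comm, mul_assoc]
      intro v
      exact LinearMap.ext_iff.1 h v
  · -- P_j ⊗ N_i ≅ M₀
    set f := (TensorProduct.rid k (Fin 2 → k)).trans (eS ((-1:k)^i) (q ^ j)) with hf
    refine ⟨f, ?_, ?_⟩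
    · have h : f.toLinearMap ∘ₗ ((Datum.P q j).tensor (Datum.N (k := k) i)).G =
          (Datum.M0 (k := k)).G ∘ₗ f.toLinearMap := by
        apply TensorProduct.ext'
        intro x c
        simp [Datum.tensor, Datum.P, Datum.N, Datum.M0, hf, eS]
      intro v; exact LinearMap.ext_iff.1 h v
    · have h : f.toLinearMap ∘ₗ ((Datum.P q j).tensor (Datum.N (k := k) i)).X =
          (Datum.M0 (k := k)).X ∘ₗ f.toLinearMap := by
        apply TensorProduct.ext'
        intro x c
        simp [Datum.tensor, Datum.P, Datum.N, Datum.M0, hf, eS, Matrix.toLin'_apply,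
          Matrix.mulVec, dotProduct, Fin.sum_univ_two, smul_tmul']
        obtain ⟨e, hg, he⟩ : ∃ e : k, (-1:k)^i = e ∧ e * e = 1 := ⟨_, rfl, hε⟩
        funext m
        fin_cases m
        · simp; rw [hg]; ring
        · simp; rw [hg]; linear_combination (c * q^(2*j) * x 1) * he
      intro v; exact LinearMap.ext_iff.1 h v
  · -- not isomorphic
    rintro ⟨f, -, hX⟩
    have hX1 : ∀ v : k ⊗[k] (Fin 2 → k),
        ((Datum.N (k := k) i).tensor (Datum.P q j)).X v = ((-1:k)^i) • v := by
      intro v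
      have h : ((Datum.N (k := k) i).tensor (Datum.P q j)).X =
          ((-1:k)^i) • (LinearMap.id : Module.End k (k ⊗[k] (Fin 2 → k))) := by
        apply TensorProduct.ext'
        intro x y
        simp [Datum.tensor, Datum.N, Datum.P, smul_tmul']
      rw [h]; rfl
    have key : ∀ w : (Fin 2 → k) ⊗[k] k,
        ((Datum.P q j).tensor (Datum.N (k := k) i)).X w = ((-1:k)^i) • w := by
      intro w
      obtain ⟨v, rfl⟩ := f.surjective w
      rw [← hX v, hX1 v, map_smul]
    have h2 := congrFun (congrArg (TensorProduct.rid k (Fin 2 → k))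
      (key ((![1,0] : Fin 2 → k) ⊗ₜ[k] (1:k)))) 1
    simp [Datum.tensor, Datum.P, Datum.N, Matrix.toLin'_apply, Matrix.mulVec,
      dotProduct, Fin.sum_univ_two, smul_tmul'] at h2
end
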